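/- Let φ : N → M be a proper analytic map between real analytic manifolds. Then the image φ(N) is a subanalytic subset of M. -/

import Mathlib

open Filter Topology Set

noncomputable section

namespace Paper

variable {K : Type} [RCLike K]

/-! ### Ranks of analytic maps between Euclidean spaces -/

/-- The rank of the differential of `f` at the point `q`. -/
def diffRank {m n : ℕ} (f : (Fin m → K) → (Fin n → K)) (q : Fin m → K) : ℕ :=
  Module.finrank K (LinearMap.range ((fderiv K f q : (Fin m → K) →L[K] (Fin n → K)) :
    (Fin m → K) →ₗ[K] (Fin n → K)))

/-- The generic rank of `f` at `p` : the maximum, over points `q` in arbitrarily small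
neighborhoods of `p`, of the rank of the differential of `f` at `q`. -/
def genericRank {m n : ℕ} (f : (Fin m → K) → (Fin n → K)) (p : Fin m → K) : ℕ :=
  sInf { r : ℕ | ∃ U ∈ 𝓝 p, r = sSup (diffRank f '' U) }

/-- Partial derivative in the direction of the `j`-th coordinate. -/
def pderivK {m : ℕ} (j : Fin m) (f : (Fin m → K) → K) : (Fin m → K) → K :=
  fun q => fderiv K f q (Pi.single j 1)

/-- Iterated partial derivative in the direction of the `j`-th coordinate. -/
def pderivIter {m : ℕ} (j : Fin m) : ℕ → ((Fin m → K) → K) → ((Fin m → K) → K)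
  | 0, f => f
  | k + 1, f => pderivK j (pderivIter j k f)

/-- Iterated partial derivative `∂^γ`. -/
def mpderiv {m : ℕ} (γ : Fin m →₀ ℕ) (f : (Fin m → K) → K) : (Fin m → K) → K :=
  (List.finRange m).foldr (fun j g => pderivIter j (γ j) g) f

/-- Taylor coefficient `(1/γ!) ∂^γ f (p)`. -/
def taylorCoeff {m : ℕ} (f : (Fin m → K) → K) (p : Fin m → K) (γ : Fin m →₀ ℕ) : K :=
  (((∏ j, Nat.factorial (γ j) : ℕ) : K))⁻¹ * mpderiv γ f p

/-- The Taylor series of `f` at `p`, as a formal multivariate power series. -/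
def taylorSeriesAt {m : ℕ} (f : (Fin m → K) → K) (p : Fin m → K) :
    MvPowerSeries (Fin m) K :=
  fun γ => taylorCoeff f p γ

/-- The exponent `δ ↦ N` with all coordinates equal to `N`. -/
def expBound (n N : ℕ) : Fin n →₀ ℕ := Finsupp.equivFunOnFinite.symm (fun _ => N)

/-- Substitution of the family of power series `a` (each having zero constant term) in the
power series `F`.  The coefficient of `u^γ` in `F(a)` is
`∑ over δ of (coeff δ F) * coeff γ (a^δ)`; only exponents `δ` with `|δ| ≤ |γ|` contribute. -/
def msubst {R : Type*} [CommRing R] {m n : ℕ} (a : Fin n → MvPowerSeries (Fin m) R)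
    (F : MvPowerSeries (Fin n) R) : MvPowerSeries (Fin m) R :=
  fun γ => ∑ δ ∈ Finset.Iic (expBound n (γ.sum fun _ e => e)),
      (MvPowerSeries.coeff δ F) * MvPowerSeries.coeff γ (∏ i, a i ^ δ i)

/-- The Krull dimension of the set of prime ideals containing `S`; when `S` is an ideal of `R`,
this is the Krull dimension of the quotient ring `R/S`. -/
def dimOfPrimesOver {R : Type*} [CommRing R] (S : Set R) : WithBot ℕ∞ :=
  Order.krullDim { p : PrimeSpectrum R // S ⊆ p.asIdeal }

/-- The germ of `f` at `p`, translated so that it maps `0` to `0`. -/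
def centered {m n : ℕ} (f : (Fin m → K) → (Fin n → K)) (p : Fin m → K) :
    (Fin m → K) → (Fin n → K) :=
  fun u => f (p + u) - f p

/-- The kernel of the morphism `K⟦x₁,…,xₙ⟧ → K⟦u₁,…,u_m⟧` obtained by substituting the Taylor
expansions at `p` of the components of `f` (in coordinates centred at `p` and `f p`). -/
def formalKer {m n : ℕ} (f : (Fin m → K) → (Fin n → K)) (p : Fin m → K) :
    Set (MvPowerSeries (Fin n) K) :=
  { F | msubst (fun i => taylorSeriesAt (fun u => centered f p u i) 0) F = 0 }

/-- The formal rank of `f` at `p` : the Krull dimension of `K⟦x⟧/ker(f̂*_p)`. -/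
def formalRank {m n : ℕ} (f : (Fin m → K) → (Fin n → K)) (p : Fin m → K) : WithBot ℕ∞ :=
  dimOfPrimesOver (formalKer f p)

/-- `f` is regular at `p` in the sense of Gabrielov if its generic rank equals its formal
rank at `p`. -/
def GabrielovRegularAt {m n : ℕ} (f : (Fin m → K) → (Fin n → K)) (p : Fin m → K) : Prop :=
  (genericRank f p : WithBot ℕ∞) = formalRank f p

/-! ### Rings of germs of analytic functions and the analytic rank -/

/-- The ring `O_p` of germs at `p` of `K`-analytic functions, as a subring of the ring of all
germs of functions at `p`. -/
def analyticGermRing (K : Type) [RCLike K] {m : ℕ} (p : Fin m → K) :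
    Subring ((𝓝 p).Germ K) where
  carrier := { g | ∃ f : (Fin m → K) → K, AnalyticAt K f p ∧ g = (f : (𝓝 p).Germ K) }
  mul_mem' := by
    rintro a b ⟨f, hf, rfl⟩ ⟨g, hg, rfl⟩
    exact ⟨f * g, hf.mul hg, (Filter.Germ.coe_mul f g).symm⟩
  one_mem' := ⟨1, analyticAt_const, rfl⟩
  add_mem' := by
    rintro a b ⟨f, hf, rfl⟩ ⟨g, hg, rfl⟩
    exact ⟨f + g, hf.add hg, (Filter.Germ.coe_add f g).symm⟩
  zero_mem' := ⟨0, analyticAt_const, rfl⟩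
  neg_mem' := by
    rintro a ⟨f, hf, rfl⟩
    exact ⟨-f, hf.neg, (Filter.Germ.coe_neg f).symm⟩

/-- The kernel of the pullback morphism `f*_p : O_{f(p)} → O_p`, `g ↦ g ∘ f`. -/
def analyticKer {m n : ℕ} (f : (Fin m → K) → (Fin n → K)) (p : Fin m → K) :
    Set ↥(analyticGermRing K (f p)) :=
  { g | ∃ h : (Fin n → K) → K, AnalyticAt K h (f p) ∧
        (g : (𝓝 (f p)).Germ K) = (h : (𝓝 (f p)).Germ K) ∧ ∀ᶠ x in 𝓝 p, h (f x) = 0 }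

/-- The analytic rank of `f` at `p` : the Krull dimension of `O_{f(p)}/ker(f*_p)`. -/
def analyticRank {m n : ℕ} (f : (Fin m → K) → (Fin n → K)) (p : Fin m → K) : WithBot ℕ∞ :=
  dimOfPrimesOver (analyticKer f p)

/-! ### Analytic manifolds, modeled on `Fin l → K`, via charted spaces -/

/-- The image of the point `a` in the chart at `a`. -/
def chBase (K : Type) [RCLike K] (l : ℕ) {M : Type*} [TopologicalSpace M]
    [ChartedSpace (Fin l → K) M] (a : M) : Fin l → K :=
  chartAt (Fin l → K) a a

/-- The local representative of `f : M → N` in the charts at `a` and `f a`. -/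
def chRep (K : Type) [RCLike K] (l l' : ℕ) {M N : Type*} [TopologicalSpace M]
    [ChartedSpace (Fin l → K) M] [TopologicalSpace N] [ChartedSpace (Fin l' → K) N]
    (f : M → N) (a : M) : (Fin l → K) → (Fin l' → K) :=
  (chartAt (Fin l' → K) (f a)) ∘ f ∘ (chartAt (Fin l → K) a).symm

/-- `M` is a `K`-analytic manifold: all transition maps of the atlas are analytic. -/
def AnalyticCharts (K : Type) [RCLike K] (l : ℕ) (M : Type*) [TopologicalSpace M]
    [ChartedSpace (Fin l → K) M] : Prop :=
  ∀ x y : M, ∀ z ∈ (chartAt (Fin l → K) x).target ∩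
      ((chartAt (Fin l → K) x).symm ⁻¹' (chartAt (Fin l → K) y).source),
    AnalyticAt K ((chartAt (Fin l → K) y) ∘ (chartAt (Fin l → K) x).symm) z

/-- A map between analytic manifolds is analytic at `a` if it is continuous at `a` and its local
representative in charts is analytic. -/
def MAnalyticAt (K : Type) [RCLike K] (l l' : ℕ) {M N : Type*} [TopologicalSpace M]
    [ChartedSpace (Fin l → K) M] [TopologicalSpace N] [ChartedSpace (Fin l' → K) N]
    (f : M → N) (a : M) : Prop :=
  ContinuousAt f a ∧ AnalyticAt K (chRep K l l' f a) (chBase K l a)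

/-- A `K`-valued function on a manifold is analytic at `a` if its representative in the chart
at `a` is analytic. -/
def MAnalyticFunAt {K : Type} [RCLike K] (l : ℕ) {M : Type*} [TopologicalSpace M]
    [ChartedSpace (Fin l → K) M] (f : M → K) (a : M) : Prop :=
  AnalyticAt K (f ∘ (chartAt (Fin l → K) a).symm) (chBase K l a)

/-- `f : M → N` is regular at `a` in the sense of Gabrielov: its generic rank at `a` equals its
formal rank at `a` (both computed on its local representative in charts). -/
def MRegularAt (K : Type) [RCLike K] (l l' : ℕ) {M N : Type*} [TopologicalSpace M]
    [ChartedSpace (Fin l → K) M] [TopologicalSpace N] [ChartedSpace (Fin l' → K) N]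
    (f : M → N) (a : M) : Prop :=
  GabrielovRegularAt (chRep K l l' f a) (chBase K l a)

/-- The generic rank of `f : M → N` at `a`. -/
def mgenericRank (K : Type) [RCLike K] (l l' : ℕ) {M N : Type*} [TopologicalSpace M]
    [ChartedSpace (Fin l → K) M] [TopologicalSpace N] [ChartedSpace (Fin l' → K) N]
    (f : M → N) (a : M) : ℕ :=
  genericRank (chRep K l l' f a) (chBase K l a)

/-- The formal rank of `f : M → N` at `a`. -/
def mformalRank (K : Type) [RCLike K] (l l' : ℕ) {M N : Type*} [TopologicalSpace M]
    [ChartedSpace (Fin l → K) M] [TopologicalSpace N] [ChartedSpace (Fin l' → K) N]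
    (f : M → N) (a : M) : WithBot ℕ∞ :=
  formalRank (chRep K l l' f a) (chBase K l a)

/-- The analytic rank of `f : M → N` at `a`. -/
def manalyticRank (K : Type) [RCLike K] (l l' : ℕ) {M N : Type*} [TopologicalSpace M]
    [ChartedSpace (Fin l → K) M] [TopologicalSpace N] [ChartedSpace (Fin l' → K) N]
    (f : M → N) (a : M) : WithBot ℕ∞ :=
  analyticRank (chRep K l l' f a) (chBase K l a)

/-- A subset `Z` of a manifold `M` is an analytic subset if every point of `M` has an open
neighborhood `U` and finitely many analytic functions on `U` whose common zero set is `Z ∩ U`. -/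
def IsAnalyticSet (K : Type) [RCLike K] (l : ℕ) {M : Type*} [TopologicalSpace M]
    [ChartedSpace (Fin l → K) M] (Z : Set M) : Prop :=
  ∀ a : M, ∃ U : Set M, IsOpen U ∧ a ∈ U ∧ ∃ s : ℕ, ∃ f : Fin s → M → K,
    (∀ i, ∀ x ∈ U, MAnalyticFunAt l (f i) x) ∧ Z ∩ U = { x ∈ U | ∀ i, f i x = 0 }

/-- A subset `Z` of an open set `Ω ⊆ K^m` is an analytic subset of `Ω`. -/
def IsAnalyticSubsetIn {K : Type} [RCLike K] {m : ℕ} (Ω Z : Set (Fin m → K)) : Prop :=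
  Z ⊆ Ω ∧ ∀ p ∈ Ω, ∃ V : Set (Fin m → K), IsOpen V ∧ p ∈ V ∧ V ⊆ Ω ∧
    ∃ s : ℕ, ∃ f : Fin s → (Fin m → K) → K,
      (∀ i, ∀ x ∈ V, AnalyticAt K (f i) x) ∧ Z ∩ V = { x ∈ V | ∀ i, f i x = 0 }

/-- A proper map: preimages of compact sets are compact. -/
def ProperMap {M N : Type*} [TopologicalSpace M] [TopologicalSpace N] (f : M → N) : Prop :=
  ∀ C : Set N, IsCompact C → IsCompact (f ⁻¹' C)

/-! ### Semianalytic and subanalytic subsets of real analytic manifolds -/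

section Real

variable (l : ℕ) {M : Type*} [TopologicalSpace M] [ChartedSpace (Fin l → ℝ) M]

/-- A semianalytic subset of a real analytic manifold. -/
def Semianalytic (X : Set M) : Prop :=
  ∀ a : M, ∃ U : Set M, IsOpen U ∧ a ∈ U ∧ ∃ p q : ℕ,
    ∃ f : Fin p → M → ℝ, ∃ g : Fin p → Fin q → M → ℝ,
      (∀ i, ∀ x ∈ U, MAnalyticFunAt l (f i) x) ∧
      (∀ i j, ∀ x ∈ U, MAnalyticFunAt l (g i j) x) ∧
      X ∩ U = ⋃ i, { x ∈ U | f i x = 0 ∧ ∀ j, 0 < g i j x }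

/-- Analyticity at a point for real valued functions on `M × ℝ^q` (chart on the first factor,
identity on the second). -/
def ProdAnalyticFunAt {q : ℕ} (f : M × (Fin q → ℝ) → ℝ) (z : M × (Fin q → ℝ)) : Prop :=
  AnalyticAt ℝ (fun y : (Fin l → ℝ) × (Fin q → ℝ) => f ((chartAt (Fin l → ℝ) z.1).symm y.1, y.2))
    (chartAt (Fin l → ℝ) z.1 z.1, z.2)

/-- A semianalytic subset of `M × ℝ^q`. -/
def SemianalyticProd {q : ℕ} (S : Set (M × (Fin q → ℝ))) : Prop :=
  ∀ a : M × (Fin q → ℝ), ∃ U : Set (M × (Fin q → ℝ)), IsOpen U ∧ a ∈ U ∧ ∃ p r : ℕ,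
    ∃ f : Fin p → M × (Fin q → ℝ) → ℝ, ∃ g : Fin p → Fin r → M × (Fin q → ℝ) → ℝ,
      (∀ i, ∀ x ∈ U, ProdAnalyticFunAt l (f i) x) ∧
      (∀ i j, ∀ x ∈ U, ProdAnalyticFunAt l (g i j) x) ∧
      S ∩ U = ⋃ i, { x ∈ U | f i x = 0 ∧ ∀ j, 0 < g i j x }

/-- A subanalytic subset of a real analytic manifold: locally the projection of a relatively
compact semianalytic subset of `M × ℝ^q`. -/
def Subanalytic (X : Set M) : Prop :=
  ∀ a : M, ∃ U : Set M, IsOpen U ∧ a ∈ U ∧ ∃ q : ℕ, ∃ S : Set (M × (Fin q → ℝ)),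
    SemianalyticProd l S ∧ IsCompact (closure S) ∧ X ∩ U = Prod.fst '' S

/-- `S ⊆ ℝ^l` is, near the point `p`, a `k`-dimensional analytic submanifold: locally it is the
zero set of `l - k` analytic functions with linearly independent differentials. -/
def EuclidSubmanifoldAt (S : Set (Fin l → ℝ)) (k : ℕ) (p : Fin l → ℝ) : Prop :=
  k ≤ l ∧ ∃ V : Set (Fin l → ℝ), IsOpen V ∧ p ∈ V ∧
    ∃ h : Fin (l - k) → (Fin l → ℝ) → ℝ,
      (∀ i, ∀ x ∈ V, AnalyticAt ℝ (h i) x) ∧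
      (∀ x ∈ V, LinearIndependent ℝ (fun i => fderiv ℝ (h i) x)) ∧
      S ∩ V = { x ∈ V | ∀ i, h i x = 0 }

/-- `X` is, near the point `a ∈ M`, a `k`-dimensional analytic submanifold of `M`. -/
def SubmanifoldAt (X : Set M) (k : ℕ) (a : M) : Prop :=
  ∃ U : Set M, IsOpen U ∧ a ∈ U ∧ U ⊆ (chartAt (Fin l → ℝ) a).source ∧
    ∀ x ∈ X ∩ U,
      EuclidSubmanifoldAt l ((chartAt (Fin l → ℝ) a) '' (X ∩ U)) k (chartAt (Fin l → ℝ) a x)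

/-- `X^{(k)}`: the set of points of `X` near which `X` is a `k`-dimensional analytic
submanifold of `M`. -/
def smoothPts (X : Set M) (k : ℕ) : Set M :=
  { a | a ∈ X ∧ SubmanifoldAt l X k a }

/-- The dimension of a subanalytic set: the largest `k` such that `X^{(k)} ≠ ∅`
(`⊥` if there is no such `k`). -/
def sdim (X : Set M) : WithBot ℕ∞ :=
  ⨆ k ∈ { k : ℕ | (smoothPts l X k).Nonempty }, (k : WithBot ℕ∞)

/-- `Σ^{(k)}`: the closure of `X^{(k)}` intersected with `X`. -/
def strat (X : Set M) (k : ℕ) : Set M :=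
  closure (smoothPts l X k) ∩ X

/-- The germ of `X` at `a` is contained in the germ of `Y` at `a`. -/
def germSubset {M : Type*} [TopologicalSpace M] (X Y : Set M) (a : M) : Prop :=
  ∃ U ∈ 𝓝 a, X ∩ U ⊆ Y

/-- The germs of `X` and `Y` at `a` coincide. -/
def germEq {M : Type*} [TopologicalSpace M] (X Y : Set M) (a : M) : Prop :=
  ∃ U ∈ 𝓝 a, X ∩ U = Y ∩ U

/-- The dimension of the germ of `X` at `a`. -/
def germDim (X : Set M) (a : M) : WithBot ℕ∞ :=
  ⨅ U ∈ 𝓝 a, sdim l (X ∩ U)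

/-- A set `X` of pure dimension is Nash at `a` if there is a germ of a semianalytic set at `a`
containing the germ of `X` and of the same dimension. -/
def NashAtPure (X : Set M) (a : M) : Prop :=
  ∃ Y : Set M, Semianalytic l Y ∧ germSubset X Y a ∧ germDim l Y a = germDim l X a

/-- A subanalytic set `X` is Nash at `a` if each pure-dimensional part `Σ^{(k)}` of `X`
is Nash at `a`. -/
def NashAt (X : Set M) (a : M) : Prop :=
  ∀ k : ℕ, NashAtPure l (strat l X k) a

/-- `𝒩(X)`: the set of points at which `X` is Nash. -/
def NashPoints (X : Set M) : Set M :=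
  { a | NashAt l X a }

/-- `𝒮𝒜(X)`: the set of points at which the germ of `X` is semianalytic. -/
def SAPoints (X : Set M) : Set M :=
  { a | ∃ Y : Set M, Semianalytic l Y ∧ germEq X Y a }

end Real

/-! ### Admissible families of analytic germs -/

/-- The admissible family `Ψ_a(u) = Φ(φ(a)+u) − Φ(φ(a))` associated to `Φ` and `φ`. -/
def Psi {K : Type} [RCLike K] {l m n : ℕ} (Φ : (Fin m → K) → (Fin n → K))
    (φ : (Fin l → K) → (Fin m → K)) (a : Fin l → K) : (Fin m → K) → (Fin n → K) :=
  fun u => Φ (φ a + u) - Φ (φ a)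

/-- The ring `O(Λ)` of analytic functions on `Λ`: functions on `Λ` which extend to a function
analytic at every point of `Λ`. -/
def Oring {K : Type} [RCLike K] {l : ℕ} (Λ : Set (Fin l → K)) : Subring (↥Λ → K) where
  carrier := { f | ∃ g : (Fin l → K) → K, (∀ x ∈ Λ, AnalyticAt K g x) ∧ ∀ a : ↥Λ, f a = g ↑a }
  mul_mem' := by
    rintro f₁ f₂ ⟨g₁, h₁, e₁⟩ ⟨g₂, h₂, e₂⟩
    exact ⟨g₁ * g₂, fun x hx => (h₁ x hx).mul (h₂ x hx), fun a => by
      simp [Pi.mul_apply, e₁ a, e₂ a]⟩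
  one_mem' := ⟨1, fun x _ => analyticAt_const, fun a => rfl⟩
  add_mem' := by
    rintro f₁ f₂ ⟨g₁, h₁, e₁⟩ ⟨g₂, h₂, e₂⟩
    exact ⟨g₁ + g₂, fun x hx => (h₁ x hx).add (h₂ x hx), fun a => by
      simp [Pi.add_apply, e₁ a, e₂ a]⟩
  zero_mem' := ⟨0, fun x _ => analyticAt_const, fun a => rfl⟩
  neg_mem' := by
    rintro f ⟨g, h, e⟩
    exact ⟨-g, fun x hx => (h x hx).neg, fun a => by simp [Pi.neg_apply, e a]⟩

/-- The coefficient `F_{i,γ} = (1/γ!) ∂^γ (x_i ∘ Φ) ∘ φ`, as a function on `Λ`. -/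
def PsiLcoeffFun {K : Type} [RCLike K] {l m n : ℕ} (Φ : (Fin m → K) → (Fin n → K))
    (φ : (Fin l → K) → (Fin m → K)) (Λ : Set (Fin l → K)) (i : Fin n) (γ : Fin m →₀ ℕ) :
    ↥Λ → K :=
  fun a => taylorCoeff (fun w => Φ w i) (φ ↑a) γ

open scoped Classical in
/-- The coefficient `F_{i,γ}` as an element of `L = Frac(O(Λ))`. -/
def PsiLcoeff {K : Type} [RCLike K] {l m n : ℕ} (Φ : (Fin m → K) → (Fin n → K))
    (φ : (Fin l → K) → (Fin m → K)) (Λ : Set (Fin l → K)) (i : Fin n) (γ : Fin m →₀ ℕ) :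
    FractionRing ↥(Oring Λ) :=
  if h : PsiLcoeffFun Φ φ Λ i γ ∈ Oring Λ then
    algebraMap ↥(Oring Λ) (FractionRing ↥(Oring Λ)) ⟨PsiLcoeffFun Φ φ Λ i γ, h⟩
  else 0

/-- The power series `Ψ*_L(x_i) = ∑_{γ ≠ 0} F_{i,γ} u^γ ∈ L⟦u⟧`. -/
def PsiLseries {K : Type} [RCLike K] {l m n : ℕ} (Φ : (Fin m → K) → (Fin n → K))
    (φ : (Fin l → K) → (Fin m → K)) (Λ : Set (Fin l → K)) (i : Fin n) :
    MvPowerSeries (Fin m) (FractionRing ↥(Oring Λ)) :=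
  fun γ => if γ = 0 then 0 else PsiLcoeff Φ φ Λ i γ

/-- Formal partial derivative of a multivariate power series. -/
def formalPDeriv {R : Type*} [CommRing R] {m : ℕ} (i : Fin m) (F : MvPowerSeries (Fin m) R) :
    MvPowerSeries (Fin m) R :=
  fun γ => ((γ i + 1 : ℕ) : R) * F (γ + Finsupp.single i 1)

/-- The generic rank of `Ψ*_L`: the rank of the Jacobian matrix `[∂ Ψ*_L(x_j) / ∂ u_i]` over
the fraction field of `L⟦u⟧`. -/
def LgenericRank {K : Type} [RCLike K] {l m n : ℕ} (Φ : (Fin m → K) → (Fin n → K))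
    (φ : (Fin l → K) → (Fin m → K)) (Λ : Set (Fin l → K)) : ℕ :=
  (Matrix.of fun (i : Fin m) (j : Fin n) =>
    (algebraMap (MvPowerSeries (Fin m) (FractionRing ↥(Oring Λ)))
        (FractionRing (MvPowerSeries (Fin m) (FractionRing ↥(Oring Λ)))))
      (formalPDeriv i (PsiLseries Φ φ Λ j))).rank

/-- The kernel of `Ψ*_L : L⟦x⟧ → L⟦u⟧`. -/
def LformalKer {K : Type} [RCLike K] {l m n : ℕ} (Φ : (Fin m → K) → (Fin n → K))
    (φ : (Fin l → K) → (Fin m → K)) (Λ : Set (Fin l → K)) :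
    Set (MvPowerSeries (Fin n) (FractionRing ↥(Oring Λ))) :=
  { F | msubst (fun i => PsiLseries Φ φ Λ i) F = 0 }

/-- The formal rank of `Ψ*_L`: the Krull dimension of `L⟦x⟧ / ker(Ψ*_L)`. -/
def LformalRank {K : Type} [RCLike K] {l m n : ℕ} (Φ : (Fin m → K) → (Fin n → K))
    (φ : (Fin l → K) → (Fin m → K)) (Λ : Set (Fin l → K)) : WithBot ℕ∞ :=
  dimOfPrimesOver (LformalKer Φ φ Λ)

/-! ### Distinguished polynomials in `R⟦x₁,…,xₙ⟧[y]` as power series in `n+1` variables -/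

/-- Restriction of an exponent on `n+1` variables to the first `n` variables. -/
def finRestrict {n : ℕ} (γ : Fin (n+1) →₀ ℕ) : Fin n →₀ ℕ :=
  Finsupp.equivFunOnFinite.symm (fun j => γ j.castSucc)

/-- The monic polynomial `y^d + ∑_{i=0}^{d-1} (∑_β c i β x^β) y^i` — where `c i` is the
coefficient of `y^{d-1-i}` — as a power series in the `n+1` variables `(x₁,…,xₙ,y)`,
`y` being the last variable. -/
def wpoly {R : Type*} [CommRing R] {n : ℕ} (d : ℕ) (c : Fin d → (Fin n →₀ ℕ) → R) :
    MvPowerSeries (Fin (n+1)) R :=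
  fun γ =>
    if he : γ (Fin.last n) < d then c ⟨d - 1 - γ (Fin.last n), by omega⟩ (finRestrict γ)
    else if γ (Fin.last n) = d ∧ finRestrict γ = 0 then 1 else 0

open scoped Classical in
/-- An analytic function on `Λ`, viewed as an element of `L = Frac(O(Λ))`. -/
def Lelem {K : Type} [RCLike K] {l : ℕ} (Λ : Set (Fin l → K)) (g : (Fin l → K) → K) :
    FractionRing ↥(Oring Λ) :=
  if h : (fun a : ↥Λ => g ↑a) ∈ Oring Λ then
    algebraMap ↥(Oring Λ) (FractionRing ↥(Oring Λ)) ⟨fun a : ↥Λ => g ↑a, h⟩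
  else 0

/-! ### Identification of `ℂ^m` with `ℝ^{2m}` -/

/-- The standard identification `ℝ^{2m} → ℂ^m`. -/
def toC (m : ℕ) (v : Fin (2*m) → ℝ) : Fin m → ℂ :=
  fun j => (v ⟨2*j.1, by have := j.2; omega⟩ : ℝ) + (v ⟨2*j.1+1, by have := j.2; omega⟩ : ℝ) * Complex.I

/-- The standard identification `ℂ^n → ℝ^{2n}`. -/
def toR (n : ℕ) (w : Fin n → ℂ) : Fin (2*n) → ℝ :=
  fun i => if i.1 % 2 = 0 then (w ⟨i.1 / 2, by have := i.2; omega⟩).re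
           else (w ⟨i.1 / 2, by have := i.2; omega⟩).im

/-! ### Miscellaneous -/

/-- The semialgebraic diffeomorphism `x ↦ x / √(1+‖x‖²)` of `ℝⁿ` onto the open unit ball. -/
def stereo (n : ℕ) : (Fin n → ℝ) → (Fin n → ℝ) :=
  fun x i => x i / Real.sqrt (1 + ∑ j, (x j) ^ 2)

/-- A finitely subanalytic subset of `ℝⁿ`. -/
def FinitelySubanalytic (n : ℕ) (X : Set (Fin n → ℝ)) : Prop :=
  Subanalytic n (stereo n '' X)

/-- A real analytic manifold of dimension `k`, as a bundled charted space with analytic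
transition maps. -/
structure RealAnalyticManifold (k : ℕ) where
  /-- the underlying set of the manifold -/
  carrier : Type
  [topInst : TopologicalSpace carrier]
  [csInst : ChartedSpace (Fin k → ℝ) carrier]
  t2 : T2Space carrier
  analytic : AnalyticCharts ℝ k carrier

attribute [instance] RealAnalyticManifold.topInst RealAnalyticManifold.csInst

/-! Since `φ` is proper, the preimage of a compact chart neighbourhood of `a` is covered by
finitely many chart balls `B_b` of `N`, `c_b` the chart at `b`. Near `a`, the image of `φ` is
then the projection of the union of the graphs `{(φ(c_b⁻¹ v), v) : v ∈ B_b}` lying over a chart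
ball around `a`. Each graph is relatively compact, and near any point of its closure it is cut
out by the equations `ψ x = ψ(φ(c_b⁻¹ v))`, `ψ` the chart at `a`, and the inequalities defining
the two balls; these are analytic there because the closed balls lie inside the chart domains. -/

open Metric

section ChartBalls

variable (H : Type*) [PseudoMetricSpace H] {X : Type*} [TopologicalSpace X] [ChartedSpace H X]

def chartBall (x : X) (r : ℝ) : Set X :=
  (chartAt H x).source ∩ chartAt H x ⁻¹' ball (chartAt H x x) r

variable {H}

theorem isOpen_chartBall (x : X) (r : ℝ) : IsOpen (chartBall H x r) :=
  (chartAt H x).isOpen_inter_preimage isOpen_ball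

theorem mem_chartBall_self (x : X) {r : ℝ} (hr : 0 < r) : x ∈ chartBall H x r :=
  ⟨mem_chart_source H x, mem_ball_self hr⟩

theorem exists_closedBall_subset_chart_target (x : X) :
    ∃ r > 0, closedBall (chartAt H x x) r ⊆ (chartAt H x).target :=
  nhds_basis_closedBall.mem_iff.1
    ((chartAt H x).open_target.mem_nhds (mem_chart_target H x))

theorem exists_isCompact_chartBall_subset [ProperSpace H] {x : X} {r : ℝ}
    (hr : closedBall (chartAt H x x) r ⊆ (chartAt H x).target) :
    ∃ C, IsCompact C ∧ chartBall H x r ⊆ C ∧ C ⊆ (chartAt H x).source := by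
  refine ⟨(chartAt H x).symm '' closedBall (chartAt H x x) r,
    (isCompact_closedBall _ _).image_of_continuousOn ((chartAt H x).continuousOn_symm.mono hr),
    fun y hy => ⟨chartAt H x y, ball_subset_closedBall hy.2, (chartAt H x).left_inv hy.1⟩,
    ?_⟩
  rintro _ ⟨v, hv, rfl⟩
  exact (chartAt H x).map_target (hr hv)

theorem closure_chartBall_subset_source [ProperSpace H] [T2Space X] {x : X} {r : ℝ}
    (hr : closedBall (chartAt H x x) r ⊆ (chartAt H x).target) :
    closure (chartBall H x r) ⊆ (chartAt H x).source := by
  obtain ⟨C, hC, hxC, hCx⟩ := exists_isCompact_chartBall_subset hr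
  exact (closure_minimal hxC hC.isClosed).trans hCx

end ChartBalls

section ChartGraphs

variable {H : Type*} [TopologicalSpace H] {M N : Type*} [TopologicalSpace N] [ChartedSpace H N]

def chartGraph (φ : N → M) (b : N) (B : Set H) : Set (M × H) :=
  {w | w.2 ∈ B ∧ w.1 = φ ((chartAt H b).symm w.2)}

theorem chartGraph_mono (φ : N → M) (b : N) {B B' : Set H} (h : B ⊆ B') :
    chartGraph φ b B ⊆ chartGraph φ b B' :=
  fun _ hw => ⟨h hw.1, hw.2⟩

theorem isCompact_chartGraph [TopologicalSpace M] {φ : N → M} (hφ : Continuous φ) (b : N)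
    {B : Set H} (hB : IsCompact B) (hBt : B ⊆ (chartAt H b).target) :
    IsCompact (chartGraph φ b B) := by
  have himage : chartGraph φ b B = (fun v => (φ ((chartAt H b).symm v), v)) '' B := by
    ext ⟨x, v⟩
    simp only [chartGraph, Set.mem_ofPred_eq, Set.mem_image, Prod.mk.injEq]
    exact ⟨fun ⟨hv, hx⟩ => ⟨v, hv, hx.symm, rfl⟩, by rintro ⟨v, hv, rfl, rfl⟩; exact ⟨hv, rfl⟩⟩
  rw [himage]
  exact hB.image_of_continuousOn
    ((hφ.comp_continuousOn ((chartAt H b).continuousOn_symm.mono hBt)).prodMk continuousOn_id)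

theorem range_inter_eq_image_fst_chartGraph {φ : N → M} {U : Set M} {t : Finset N}
    {B : N → Set H} (ht : φ ⁻¹' U ⊆ ⋃ b ∈ t, (chartAt H b).source ∩ chartAt H b ⁻¹' B b) :
    Set.range φ ∩ U = Prod.fst '' ⋃ b ∈ t, chartGraph φ b (B b) ∩ Prod.fst ⁻¹' U := by
  ext x
  constructor
  · rintro ⟨⟨y, rfl⟩, hx⟩
    obtain ⟨b, hb, hy, hyB⟩ := Set.mem_iUnion₂.1 (ht hx)
    refine ⟨(φ y, chartAt H b y), Set.mem_iUnion₂.2 ⟨b, hb, ⟨hyB, ?_⟩, hx⟩, rfl⟩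
    rw [(chartAt H b).left_inv hy]
  · rintro ⟨w, hw, rfl⟩
    obtain ⟨b, -, ⟨-, hw₁⟩, hwU⟩ := Set.mem_iUnion₂.1 hw
    exact ⟨⟨_, hw₁.symm⟩, hwU⟩

end ChartGraphs

theorem continuous_of_mAnalyticAt {l l' : ℕ} {N M : Type*}
    [TopologicalSpace N] [ChartedSpace (Fin l' → K) N]
    [TopologicalSpace M] [ChartedSpace (Fin l → K) M]
    {φ : N → M} (hφ : ∀ y, MAnalyticAt K l' l φ y) : Continuous φ :=
  continuous_iff_continuousAt.2 fun y => (hφ y).1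

theorem AnalyticCharts.analyticAt_chart_comp_chart_symm {l : ℕ} {M : Type*}
    [TopologicalSpace M] [ChartedSpace (Fin l → K) M] (hM : AnalyticCharts K l M) {x y p : M}
    (hx : p ∈ (chartAt (Fin l → K) x).source) (hy : p ∈ (chartAt (Fin l → K) y).source) :
    AnalyticAt K (chartAt (Fin l → K) y ∘ (chartAt (Fin l → K) x).symm)
      (chartAt (Fin l → K) x p) :=
  hM x y _ ⟨(chartAt (Fin l → K) x).map_source hx, by
    rwa [Set.mem_preimage, (chartAt (Fin l → K) x).left_inv hx]⟩

theorem analyticAt_chart_comp_comp_chart_symm {l l' : ℕ} {N M : Type*}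
    [TopologicalSpace N] [ChartedSpace (Fin l' → K) N]
    [TopologicalSpace M] [ChartedSpace (Fin l → K) M]
    (hN : AnalyticCharts K l' N) (hM : AnalyticCharts K l M)
    {φ : N → M} (hφ : ∀ y, MAnalyticAt K l' l φ y) {a : M} {b : N} {u : Fin l' → K}
    (hu : u ∈ (chartAt (Fin l' → K) b).target)
    (hau : φ ((chartAt (Fin l' → K) b).symm u) ∈ (chartAt (Fin l → K) a).source) :
    AnalyticAt K (chartAt (Fin l → K) a ∘ φ ∘ (chartAt (Fin l' → K) b).symm) u := by
  set c := chartAt (Fin l' → K) b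
  obtain ⟨y, hy, rfl⟩ : ∃ y ∈ c.source, c y = u := ⟨c.symm u, c.map_target hu, c.right_inv hu⟩
  rw [c.left_inv hy] at hau
  have hdc : AnalyticAt K (chartAt (Fin l' → K) y ∘ c.symm) (c y) :=
    hN.analyticAt_chart_comp_chart_symm hy (mem_chart_source _ y)
  have hφy : AnalyticAt K (chRep K l' l φ y) ((chartAt (Fin l' → K) y ∘ c.symm) (c y)) := by
    rw [Function.comp_apply, c.left_inv hy]
    exact (hφ y).2
  have hψe : AnalyticAt K (chartAt (Fin l → K) a ∘ (chartAt (Fin l → K) (φ y)).symm)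
      (chartAt (Fin l → K) (φ y) (φ y)) :=
    hM.analyticAt_chart_comp_chart_symm (mem_chart_source _ _) hau
  have hcomp := hψe.comp_of_eq (hφy.comp hdc) (by
    simp only [chRep, Function.comp_apply, c.left_inv hy,
      (chartAt (Fin l' → K) y).left_inv (mem_chart_source _ y)])
  refine hcomp.congr ?_
  have hcont : ContinuousAt c.symm (c y) := c.continuousAt_symm (c.map_source hy)
  have hd : ∀ᶠ v in 𝓝 (c y), c.symm v ∈ (chartAt (Fin l' → K) y).source :=
    hcont.eventually_mem ((chartAt (Fin l' → K) y).open_source.mem_nhds (by simp [c.left_inv hy]))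
  have he : ∀ᶠ v in 𝓝 (c y), φ (c.symm v) ∈ (chartAt (Fin l → K) (φ y)).source :=
    ((hφ _).1.comp hcont).eventually_mem
      ((chartAt (Fin l → K) (φ y)).open_source.mem_nhds
        (by simp [c.left_inv hy]))
  filter_upwards [hd, he] with v hvd hve
  simp only [chRep, Function.comp_apply, OpenPartialHomeomorph.left_inv _ hvd,
    OpenPartialHomeomorph.left_inv _ hve]

section Semianalytic

variable {l q : ℕ} {M : Type*} [TopologicalSpace M] [ChartedSpace (Fin l → ℝ) M]

theorem ProdAnalyticFunAt.sub {f g : M × (Fin q → ℝ) → ℝ} {z : M × (Fin q → ℝ)}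
    (hf : ProdAnalyticFunAt l f z) (hg : ProdAnalyticFunAt l g z) :
    ProdAnalyticFunAt l (fun w => f w - g w) z := by
  unfold ProdAnalyticFunAt at *
  exact hf.sub hg

theorem prodAnalyticFunAt_snd {h : (Fin q → ℝ) → ℝ} {z : M × (Fin q → ℝ)}
    (hh : AnalyticAt ℝ h z.2) : ProdAnalyticFunAt l (fun w => h w.2) z := by
  exact hh.comp_of_eq analyticAt_snd rfl

theorem prodAnalyticFunAt_comp_chart_fst (hM : AnalyticCharts ℝ l M) {a : M}
    {h : (Fin l → ℝ) → ℝ} {z : M × (Fin q → ℝ)} (hz : z.1 ∈ (chartAt (Fin l → ℝ) a).source)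
    (hh : AnalyticAt ℝ h (chartAt (Fin l → ℝ) a z.1)) :
    ProdAnalyticFunAt l (fun w => h (chartAt (Fin l → ℝ) a w.1)) z := by
  have hzh := hh.comp_of_eq (hM.analyticAt_chart_comp_chart_symm (mem_chart_source _ z.1) hz)
    (by simp only [Function.comp_apply,
      (chartAt (Fin l → ℝ) z.1).left_inv (mem_chart_source _ z.1)])
  exact hzh.comp_of_eq analyticAt_fst rfl

theorem SemianalyticProd.of_forall_mem_closure {S : Set (M × (Fin q → ℝ))}
    (h : ∀ z ∈ closure S, ∃ U, IsOpen U ∧ z ∈ U ∧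
      ∃ (ι κ : Type) (_ : Fintype ι) (_ : Fintype κ)
        (f : ι → M × (Fin q → ℝ) → ℝ) (g : κ → M × (Fin q → ℝ) → ℝ),
        (∀ i, ∀ x ∈ U, ProdAnalyticFunAt l (f i) x) ∧
        (∀ j, ∀ x ∈ U, ProdAnalyticFunAt l (g j) x) ∧
        S ∩ U = {x ∈ U | (∀ i, f i x = 0) ∧ ∀ j, 0 < g j x}) :
    SemianalyticProd l S := by
  intro z
  by_cases hz : z ∈ closure S
  · obtain ⟨U, hU, hzU, ι, κ, _, _, f, g, hf, hg, hSU⟩ := h z hz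
    -- the equations `f i = 0` are merged into the single equation `∑ i, f i ^ 2 = 0`
    refine ⟨U, hU, hzU, 1, Fintype.card κ, fun _ x => ∑ i, f i x ^ 2,
      fun _ j => g ((Fintype.equivFin κ).symm j), fun _ x hx => ?_, fun _ j x hx => hg _ x hx, ?_⟩
    · exact Finset.analyticAt_fun_sum _ fun i _ => (hf i x hx).pow 2
    · rw [hSU]
      ext x
      simp only [Set.mem_ofPred_eq, Set.mem_iUnion, exists_const,
        Finset.sum_eq_zero_iff_of_nonneg fun i _ => sq_nonneg (f i x), Finset.mem_univ,
        true_implies, pow_eq_zero_iff two_ne_zero]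
      exact and_congr_right fun _ => and_congr_right fun _ =>
        (Fintype.equivFin κ).symm.forall_congr_right.symm
  · refine ⟨(closure S)ᶜ, isClosed_closure.isOpen_compl, hz, 0, 0, Fin.elim0, Fin.elim0,
      fun i => i.elim0, fun i => i.elim0, ?_⟩
    rw [Set.iUnion_of_empty, Set.eq_empty_iff_forall_notMem]
    exact fun w hw => hw.2 (subset_closure hw.1)

theorem SemianalyticProd.union {S T : Set (M × (Fin q → ℝ))} (hS : SemianalyticProd l S)
    (hT : SemianalyticProd l T) : SemianalyticProd l (S ∪ T) := by
  intro z
  obtain ⟨U₁, hU₁, hz₁, p₁, r₁, f₁, g₁, hf₁, hg₁, hSU⟩ := hS z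
  obtain ⟨U₂, hU₂, hz₂, p₂, r₂, f₂, g₂, hf₂, hg₂, hTU⟩ := hT z
  -- the inequalities of each family are padded with the constant `1`
  refine ⟨U₁ ∩ U₂, hU₁.inter hU₂, ⟨hz₁, hz₂⟩, p₁ + p₂, r₁ + r₂, Fin.append f₁ f₂,
    Fin.append (fun i => Fin.append (g₁ i) fun _ _ => 1)
      (fun i => Fin.append (fun _ _ => 1) (g₂ i)), ?_, ?_, ?_⟩
  · intro i x hx
    cases i using Fin.addCases
    · simpa only [Fin.append_left] using hf₁ _ x hx.1
    · simpa only [Fin.append_right] using hf₂ _ x hx.2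
  · intro i j x hx
    cases i using Fin.addCases <;> cases j using Fin.addCases <;>
      simp only [Fin.append_left, Fin.append_right]
    exacts [hg₁ _ _ x hx.1, analyticAt_const, analyticAt_const, hg₂ _ _ x hx.2]
  · have hsplit : (S ∪ T) ∩ (U₁ ∩ U₂) = S ∩ U₁ ∩ U₂ ∪ T ∩ U₂ ∩ U₁ := by
      ext; simp only [Set.mem_union, Set.mem_inter_iff]; tauto
    rw [hsplit, hSU, hTU]
    ext x
    -- an existential over `Fin (p₁ + p₂)` is split through `Fin.forall_fin_add`
    simp only [Set.mem_union, Set.mem_inter_iff, Set.mem_iUnion, Set.mem_ofPred_eq,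
      ← not_forall_not (α := Fin (p₁ + p₂)), Fin.forall_fin_add, Fin.append_left,
      Fin.append_right, zero_lt_one, implies_true, not_and_or]
    aesop

theorem SemianalyticProd.biUnion_finset {ι : Type*} (t : Finset ι)
    {S : ι → Set (M × (Fin q → ℝ))} (h : ∀ i ∈ t, SemianalyticProd l (S i)) :
    SemianalyticProd l (⋃ i ∈ t, S i) := by
  classical
  induction t using Finset.induction_on with
  | empty => simpa using SemianalyticProd.of_forall_mem_closure (l := l) (S := ∅) (by simp)
  | insert b t _ ih =>
    rw [Finset.set_biUnion_insert]
    exact (h b (t.mem_insert_self b)).union (ih fun i hi => h i (Finset.mem_insert_of_mem hi))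

end Semianalytic

theorem mem_ball_iff_forall_sq_sub_lt {ι : Type*} [Fintype ι] {p v : ι → ℝ} {ρ : ℝ}
    (hρ : 0 < ρ) : v ∈ ball p ρ ↔ ∀ j, (v j - p j) ^ 2 < ρ ^ 2 := by
  simp only [mem_ball, dist_pi_lt_iff hρ, Real.dist_eq, sq_lt_sq, abs_of_pos hρ]

theorem analyticAt_sq_sub_sq_sub_apply {ι : Type*} [Fintype ι] (s : ℝ) (p : ι → ℝ) (j : ι)
    (v : ι → ℝ) : AnalyticAt ℝ (fun u : ι → ℝ => s ^ 2 - (u j - p j) ^ 2) v :=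
  analyticAt_const.sub (((analyticAt_pi_iff.1 analyticAt_id j).sub analyticAt_const).pow 2)

theorem semianalyticProd_chartGraph_inter_chartBall {l l' : ℕ} {N M : Type*}
    [TopologicalSpace N] [ChartedSpace (Fin l' → ℝ) N]
    [TopologicalSpace M] [ChartedSpace (Fin l → ℝ) M] [T2Space M]
    (hN : AnalyticCharts ℝ l' N) (hM : AnalyticCharts ℝ l M)
    {φ : N → M} (hφ : ∀ y, MAnalyticAt ℝ l' l φ y) {a : M} {r : ℝ} (hr : 0 < r)
    (hrt : closedBall (chartAt (Fin l → ℝ) a a) r ⊆ (chartAt (Fin l → ℝ) a).target)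
    {b : N} {ρ : ℝ} (hρ : 0 < ρ)
    (hρt : closedBall (chartAt (Fin l' → ℝ) b b) ρ ⊆ (chartAt (Fin l' → ℝ) b).target) :
    SemianalyticProd l (chartGraph φ b (ball (chartAt (Fin l' → ℝ) b b) ρ) ∩
      Prod.fst ⁻¹' chartBall (Fin l → ℝ) a r) := by
  have hφc := continuous_of_mAnalyticAt hφ
  set ψ := chartAt (Fin l → ℝ) a
  set c := chartAt (Fin l' → ℝ) b
  refine SemianalyticProd.of_forall_mem_closure fun z hz => ?_
  have hz₁ : z.1 ∈ ψ.source := closure_chartBall_subset_source hrt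
    (continuous_fst.closure_preimage_subset _ (closure_mono Set.inter_subset_right hz))
  obtain ⟨hz₂, hzφ⟩ : z.2 ∈ closedBall (c b) ρ ∧ z.1 = φ (c.symm z.2) :=
    closure_minimal (chartGraph_mono φ b ball_subset_closedBall)
      (isCompact_chartGraph hφc b (isCompact_closedBall _ _) hρt).isClosed
      (closure_mono Set.inter_subset_left hz)
  refine ⟨ψ.source ×ˢ (c.target ∩ c.symm ⁻¹' (φ ⁻¹' ψ.source)),
    ψ.open_source.prod (c.isOpen_inter_preimage_symm (ψ.open_source.preimage hφc)),
    ⟨hz₁, hρt hz₂, show φ (c.symm z.2) ∈ ψ.source from hzφ ▸ hz₁⟩, Fin l, Fin l' ⊕ Fin l,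
    inferInstance, inferInstance,
    fun j w => ψ w.1 j - ψ (φ (c.symm w.2)) j,
    Sum.elim (fun j w => ρ ^ 2 - (w.2 j - c b j) ^ 2)
      (fun j w => r ^ 2 - (ψ w.1 j - ψ a j) ^ 2),
    fun j w hw => ?_, fun j w hw => ?_, ?_⟩
  · exact (prodAnalyticFunAt_comp_chart_fst hM hw.1 (analyticAt_pi_iff.1 analyticAt_id j)).sub
      (prodAnalyticFunAt_snd (analyticAt_pi_iff.1
        (analyticAt_chart_comp_comp_chart_symm hN hM hφ hw.2.1 hw.2.2) j))
  · cases j with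
    | inl j => exact prodAnalyticFunAt_snd (analyticAt_sq_sub_sq_sub_apply _ _ _ _)
    | inr j =>
      exact prodAnalyticFunAt_comp_chart_fst hM hw.1 (analyticAt_sq_sub_sq_sub_apply _ _ _ _)
  · ext ⟨x, v⟩
    simp only [chartGraph, chartBall, Set.mem_inter_iff, Set.mem_preimage, Set.mem_prod,
      Set.mem_ofPred_eq, Sum.forall, Sum.elim_inl, Sum.elim_inr, sub_eq_zero, sub_pos,
      ← mem_ball_iff_forall_sq_sub_lt hρ, ← mem_ball_iff_forall_sq_sub_lt hr, ← funext_iff]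
    constructor
    · rintro ⟨⟨⟨hv, rfl⟩, -, hψx⟩, hUz⟩
      exact ⟨hUz, rfl, hv, hψx⟩
    · rintro ⟨hUz, hψx, hv, hxr⟩
      exact ⟨⟨⟨hv, ψ.injOn hUz.1 hUz.2.2 hψx⟩, hUz.1, hxr⟩, hUz⟩

theorem image_of_proper_analytic_map_subanalytic_general (l l' : ℕ) (N M : Type*)
    [TopologicalSpace N] [ChartedSpace (Fin l' → ℝ) N]
    [TopologicalSpace M] [ChartedSpace (Fin l → ℝ) M] [T2Space M]
    (hN : AnalyticCharts ℝ l' N) (hM : AnalyticCharts ℝ l M)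
    (φ : N → M) (hφ : ∀ a : N, MAnalyticAt ℝ l' l φ a) (hprop : ProperMap φ) :
    Subanalytic l (Set.range φ) := by
  intro a
  obtain ⟨r, hr, hrt⟩ := exists_closedBall_subset_chart_target (H := Fin l → ℝ) a
  choose ρ hρ hρt using fun b : N => exists_closedBall_subset_chart_target (H := Fin l' → ℝ) b
  obtain ⟨C, hC, hUC, -⟩ := exists_isCompact_chartBall_subset hrt
  obtain ⟨t, -, ht⟩ := (hprop C hC).elim_nhds_subcover (fun b => chartBall (Fin l' → ℝ) b (ρ b))
    fun b _ => (isOpen_chartBall b (ρ b)).mem_nhds (mem_chartBall_self b (hρ b))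
  have hφc := continuous_of_mAnalyticAt hφ
  refine ⟨chartBall (Fin l → ℝ) a r, isOpen_chartBall a r, mem_chartBall_self a hr, l',
    ⋃ b ∈ t, chartGraph φ b (ball (chartAt (Fin l' → ℝ) b b) (ρ b)) ∩
      Prod.fst ⁻¹' chartBall (Fin l → ℝ) a r, ?_, ?_, ?_⟩
  · exact SemianalyticProd.biUnion_finset t fun b _ =>
      semianalyticProd_chartGraph_inter_chartBall hN hM hφ hr hrt (hρ b) (hρt b)
  · refine (t.isCompact_biUnion fun b _ =>
      isCompact_chartGraph hφc b (isCompact_closedBall _ _) (hρt b)).closure_of_subset ?_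
    exact Set.iUnion₂_mono fun b _ =>
      Set.inter_subset_left.trans (chartGraph_mono φ b ball_subset_closedBall)
  · exact range_inter_eq_image_fst_chartGraph ((Set.preimage_mono hUC).trans ht)

/-- The image of a proper analytic map between real analytic manifolds is subanalytic. -/
theorem image_of_proper_analytic_map_subanalytic (l l' : ℕ) (N M : Type*)
    [TopologicalSpace N] [ChartedSpace (Fin l' → ℝ) N] [T2Space N]
    [TopologicalSpace M] [ChartedSpace (Fin l → ℝ) M] [T2Space M]
    (hN : AnalyticCharts ℝ l' N) (hM : AnalyticCharts ℝ l M)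
    (φ : N → M) (hφ : ∀ a : N, MAnalyticAt ℝ l' l φ a) (hprop : ProperMap φ) :
    Subanalytic l (Set.range φ) :=
  image_of_proper_analytic_map_subanalytic_general l l' N M hN hM φ hφ hprop

end Paper
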